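/- With φ as above (L ≥ 5), the vector E₁₂^{(1)}φ is not a linear combination of the vectors E₂₁^{(l)}φ, l = 2,…,L. -/

import Mathlib

open Matrix BigOperators

/-- Operator acting as the 2×2 matrix `A` on the `l`-th qubit and as identity elsewhere. -/
noncomputable def tensorFactorOp (L : ℕ) (A : Matrix (Fin 2) (Fin 2) ℂ) (l : Fin L) :
    Matrix (Fin L → Fin 2) (Fin L → Fin 2) ℂ :=
  fun s t => A (s l) (t l) * (if ∀ m, m ≠ l → s m = t m then 1 else 0)

/-- The lowering matrix `E₂₁ = [[0,0],[1,0]]`. -/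
def E21 : Matrix (Fin 2) (Fin 2) ℂ := Matrix.of ![![0, 0], ![1, 0]]

/-- Basis state with qubits `1` and `l` excited and all others in the ground state. -/
def uPat (L : ℕ) [NeZero L] (l : Fin L) : Fin L → Fin 2 :=
  fun m => if m = 0 ∨ m = l then 1 else 0

/-- The stable state
`φ = (|0…0⟩+|1…1⟩) + Σ_{l=2}^{L} (|1 0…0 1_l 0…0⟩ + |0 1…1 0_l 1…1⟩)`. -/
noncomputable def stablePhi (L : ℕ) [NeZero L] : (Fin L → Fin 2) → ℂ :=
  fun s => (if s = (fun _ => 0) then 1 else 0) + (if s = (fun _ => 1) then 1 else 0)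
    + ∑ l ∈ Finset.univ.erase 0,
        ((if s = uPat L l then 1 else 0)
          + (if s = (fun m => 1 - uPat L l m) then 1 else 0))

/-- The raising matrix `E₁₂ = [[0,1],[0,0]]`. -/
def E12 : Matrix (Fin 2) (Fin 2) ℂ := Matrix.of ![![0, 1], ![0, 0]]

/-! Suppose `E₁₂^{(1)} φ = ∑ₗ cₗ • E₂₁^{(l)} φ`. On the basis state with a single excitation at
site `l ≠ 1`, only the `l`-th term of the right-hand side survives, and the two sides read
`φ(uₗ) = 1` and `cₗ φ(0…0) = cₗ`; hence every `cₗ = 1`. On the state `0 1…1` the left-hand side is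
`φ(1…1) = 1`, while the `l`-th term on the right is `φ` of the bit flip of `uₗ`, again `1`, so
`1 = L - 1`. -/

lemma tensorFactorOp_mulVec_apply {L : ℕ} (A : Matrix (Fin 2) (Fin 2) ℂ) (l : Fin L)
    (v : (Fin L → Fin 2) → ℂ) (s : Fin L → Fin 2) :
    (tensorFactorOp L A l *ᵥ v) s = ∑ b : Fin 2, A (s l) b * v (Function.update s l b) := by
  classical
  have hinj : Set.InjOn (Function.update s l) (Finset.univ : Finset (Fin 2)) :=
    fun a _ b _ hab => by simpa using congrFun hab l
  have hsupp : ∀ t ∉ Finset.univ.image (Function.update s l),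
      tensorFactorOp L A l s t * v t = 0 := by
    intro t ht
    have hst : ¬ ∀ m, m ≠ l → s m = t m := fun hst =>
      ht (Finset.mem_image.2 ⟨t l, Finset.mem_univ _, by
        ext m; by_cases hm : m = l <;> simp_all⟩)
    simp [tensorFactorOp, hst]
  rw [mulVec, dotProduct, ← Finset.sum_subset (Finset.subset_univ _) fun t _ => hsupp t,
    Finset.sum_image hinj]
  refine Finset.sum_congr rfl fun b _ => ?_
  have hagree : ∀ m, m ≠ l → s m = Function.update s l b m := fun m hm => by simp [hm]
  simp only [tensorFactorOp, if_pos hagree, Function.update_self, mul_one]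

section
variable {L : ℕ} {l : Fin L} (v : (Fin L → Fin 2) → ℂ) {s : Fin L → Fin 2}

lemma E12_mulVec_apply_of_eq_zero (hs : s l = 0) :
    (tensorFactorOp L E12 l *ᵥ v) s = v (Function.update s l 1) := by
  simp [tensorFactorOp_mulVec_apply, hs, E12]

lemma E21_mulVec_apply_of_eq_one (hs : s l = 1) :
    (tensorFactorOp L E21 l *ᵥ v) s = v (Function.update s l 0) := by
  simp [tensorFactorOp_mulVec_apply, hs, E21]

lemma E21_mulVec_apply_of_eq_zero (hs : s l = 0) : (tensorFactorOp L E21 l *ᵥ v) s = 0 := by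
  simp [tensorFactorOp_mulVec_apply, hs, E21]

end

lemma fun_one_sub_eq_iff {ι : Type*} {s t : ι → Fin 2} :
    (fun m => 1 - s m) = t ↔ s = fun m => 1 - t m := by
  constructor <;> rintro rfl <;> simp

section
variable {L : ℕ} [NeZero L]

lemma exists_ne_zero_ne (hL : 3 ≤ L) (l : Fin L) : ∃ m : Fin L, m ≠ 0 ∧ m ≠ l := by
  by_contra! h
  have : (Finset.univ : Finset (Fin L)) ⊆ {0, l} := fun m _ => by
    simpa only [Finset.mem_insert, Finset.mem_singleton] using (eq_or_ne m 0).imp_right (h m)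
  have := (Finset.card_le_card this).trans Finset.card_le_two
  rw [Finset.card_fin] at this
  omega

lemma uPat_apply_of_ne {l m : Fin L} (hm0 : m ≠ 0) (hml : m ≠ l) : uPat L l m = 0 := by
  simp [uPat, hm0, hml]

lemma const_zero_ne_const_one : (fun _ : Fin L => (0 : Fin 2)) ≠ fun _ => 1 :=
  Function.ne_iff.2 ⟨0, by decide⟩

lemma const_zero_ne_uPat (l : Fin L) : (fun _ => 0) ≠ uPat L l :=
  Function.ne_iff.2 ⟨0, by simp [uPat]⟩

lemma const_zero_ne_one_sub_uPat (hL : 3 ≤ L) (l : Fin L) :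
    (fun _ => 0) ≠ fun m => 1 - uPat L l m := by
  obtain ⟨m, hm0, hml⟩ := exists_ne_zero_ne hL l
  exact Function.ne_iff.2 ⟨m, by simp [uPat_apply_of_ne hm0 hml]⟩

lemma uPat_ne_const_one (hL : 3 ≤ L) (l : Fin L) : uPat L l ≠ fun _ => 1 := by
  obtain ⟨m, hm0, hml⟩ := exists_ne_zero_ne hL l
  exact Function.ne_iff.2 ⟨m, by simp [uPat_apply_of_ne hm0 hml]⟩

lemma uPat_ne_one_sub_uPat (k l : Fin L) : uPat L k ≠ fun m => 1 - uPat L l m :=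
  Function.ne_iff.2 ⟨0, by simp [uPat]⟩

lemma uPat_inj {k l : Fin L} (hk : k ≠ 0) : uPat L k = uPat L l ↔ k = l := by
  refine ⟨fun h => ?_, congrArg _⟩
  simpa [uPat, hk, eq_comm] using congrFun h k

lemma stablePhi_one_sub (s : Fin L → Fin 2) :
    stablePhi L (fun m => 1 - s m) = stablePhi L s := by
  simp only [stablePhi, fun_one_sub_eq_iff, sub_zero, sub_self, sub_sub_cancel]
  exact congrArg₂ _ (add_comm _ _) (Finset.sum_congr rfl fun _ _ => add_comm _ _)

lemma stablePhi_const_zero (hL : 3 ≤ L) : stablePhi L (fun _ => 0) = 1 := by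
  simp [stablePhi, const_zero_ne_const_one, const_zero_ne_uPat, const_zero_ne_one_sub_uPat hL]

lemma stablePhi_const_one (hL : 3 ≤ L) : stablePhi L (fun _ => 1) = 1 := by
  simpa using (stablePhi_one_sub (fun _ : Fin L => (0 : Fin 2))).trans (stablePhi_const_zero hL)

lemma stablePhi_uPat (hL : 3 ≤ L) {l : Fin L} (hl : l ≠ 0) : stablePhi L (uPat L l) = 1 := by
  simp [stablePhi, (const_zero_ne_uPat l).symm, uPat_ne_const_one hL, uPat_inj hl,
    uPat_ne_one_sub_uPat, hl]

lemma stablePhi_one_sub_uPat (hL : 3 ≤ L) {l : Fin L} (hl : l ≠ 0) :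
    stablePhi L (fun m => 1 - uPat L l m) = 1 :=
  (stablePhi_one_sub _).trans (stablePhi_uPat hL hl)

end

section
variable {L : ℕ} [NeZero L] (hL : 3 ≤ L)
include hL

lemma E12_mulVec_stablePhi_single {l : Fin L} (hl : l ≠ 0) :
    (tensorFactorOp L E12 0 *ᵥ stablePhi L) (Pi.single l 1) = 1 := by
  rw [E12_mulVec_apply_of_eq_zero _ (Pi.single_eq_of_ne' hl _)]
  convert stablePhi_uPat hL hl using 2
  ext m
  by_cases hm0 : m = 0
  · simp [hm0, uPat]
  · by_cases hml : m = l <;> simp [hm0, hml, uPat, Function.update_apply]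

lemma E21_mulVec_stablePhi_single (l : Fin L) :
    (tensorFactorOp L E21 l *ᵥ stablePhi L) (Pi.single l 1) = 1 := by
  rw [E21_mulVec_apply_of_eq_one _ (Pi.single_eq_same l _)]
  convert stablePhi_const_zero hL using 2
  ext m
  by_cases hml : m = l <;> simp [hml]

lemma E12_mulVec_stablePhi_update_const_one :
    (tensorFactorOp L E12 0 *ᵥ stablePhi L) (Function.update (fun _ => 1) 0 0) = 1 := by
  rw [E12_mulVec_apply_of_eq_zero _ (Function.update_self ..), Function.update_idem,
    Function.update_eq_self, stablePhi_const_one hL]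

lemma E21_mulVec_stablePhi_update_const_one {k : Fin L} (hk : k ≠ 0) :
    (tensorFactorOp L E21 k *ᵥ stablePhi L) (Function.update (fun _ => 1) 0 0) = 1 := by
  rw [E21_mulVec_apply_of_eq_one _ (Function.update_of_ne hk ..)]
  convert stablePhi_one_sub_uPat hL hk using 2
  ext m
  by_cases hm0 : m = 0
  · simp [hm0, hk.symm, uPat]
  · by_cases hmk : m = k <;> simp [hm0, hmk, uPat]

end

/-- For `L ≥ 5` the vector `E₁₂^{(1)}φ` is not a linear combination of the vectors
`E₂₁^{(l)}φ`, `l = 2,…,L`. -/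
theorem stmt12 (L : ℕ) [NeZero L] (hL : 5 ≤ L) :
    ∀ c : Fin L → ℂ,
      (tensorFactorOp L E12 0).mulVec (stablePhi L) ≠
        ∑ l ∈ Finset.univ.erase 0,
          c l • (tensorFactorOp L E21 l).mulVec (stablePhi L) := by
  intro c h
  have hL3 : 3 ≤ L := by omega
  have hpt : ∀ s, (tensorFactorOp L E12 0 *ᵥ stablePhi L) s =
      ∑ k ∈ Finset.univ.erase 0, c k * (tensorFactorOp L E21 k *ᵥ stablePhi L) s :=
    fun s => by simpa [Finset.sum_apply] using congrFun h s
  have hc : ∀ l ≠ 0, c l = 1 := fun l hl => by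
    have := hpt (Pi.single l 1)
    rwa [E12_mulVec_stablePhi_single hL3 hl, Finset.sum_eq_single_of_mem l (by simp [hl])
      fun k _ hkl => by rw [E21_mulVec_apply_of_eq_zero _ (Pi.single_eq_of_ne hkl _), mul_zero],
      E21_mulVec_stablePhi_single hL3, mul_one, eq_comm] at this
  have hsum := hpt (Function.update (fun _ => 1) 0 0)
  rw [E12_mulVec_stablePhi_update_const_one hL3, Finset.sum_congr rfl fun k hk => by
    rw [hc k (Finset.ne_of_mem_erase hk),
      E21_mulVec_stablePhi_update_const_one hL3 (Finset.ne_of_mem_erase hk), mul_one],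
    Finset.sum_const, nsmul_one, Finset.card_erase_of_mem (Finset.mem_univ _),
    Finset.card_fin] at hsum
  have : 1 = L - 1 := by exact_mod_cast hsum
  omega
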